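/- arXiv:1101.0573 — 2 statements merged into one kernel-verified Lean document; each statement's English description precedes it below -/
import Mathlib

section
/- Let (E',F') →f (E,F) →g (E'',F'') be an admissible exact sequence of X-filtered R-modules in which f and g are boundedly bicontrolled of filtration degree ≤ b. If F' and F'' are both d-insular, then F is (4b + 2d)-insular. -/
open Set Metric

/-- The metric `D`-enlargement `S[D]` of a subset `S` of a metric space `X`. -/
def enl {X : Type*} [MetricSpace X] (S : Set X) (D : ℝ) : Set X :=
  {x : X | ∃ s ∈ S, dist x s ≤ D}

lemma enl_mono' {X : Type*} [MetricSpace X] {S S' : Set X} (h : S ⊆ S') (D : ℝ) :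
    enl S D ⊆ enl S' D := fun _ ⟨s, hs, hd⟩ => ⟨s, h hs, hd⟩

lemma subset_enl' {X : Type*} [MetricSpace X] (S : Set X) {D : ℝ} (hD : 0 ≤ D) :
    S ⊆ enl S D := fun x hx => ⟨x, hx, by simpa using hD⟩

lemma enl_enl' {X : Type*} [MetricSpace X] (S : Set X) (a c : ℝ) :
    enl (enl S a) c ⊆ enl S (a + c) := by
  rintro x ⟨y, ⟨s, hs, hys⟩, hxy⟩
  exact ⟨s, hs, by have := dist_triangle x y s; linarith⟩

lemma enl_radius_mono' {X : Type*} [MetricSpace X] (S : Set X) {a c : ℝ} (h : a ≤ c) :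
    enl S a ⊆ enl S c := fun _ ⟨s, hs, hd⟩ => ⟨s, hs, hd.trans h⟩


/-- `F` is an `X`-filtration of the `R`-module `M`: a monotone assignment of submodules
with `F ∅ = 0` and `F X = M`. -/
def IsXFiltration {R X M : Type*} [Ring R] [MetricSpace X] [AddCommGroup M] [Module R M]
    (F : Set X → Submodule R M) : Prop :=
  Monotone F ∧ F (∅ : Set X) = ⊥ ∧ F Set.univ = ⊤

/-- `f` is boundedly controlled with bound `D`: `f(F₁(S)) ⊆ F₂(S[D])` for all `S`. -/
def BddCtrl {R X M₁ M₂ : Type*} [Ring R] [MetricSpace X]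
    [AddCommGroup M₁] [Module R M₁] [AddCommGroup M₂] [Module R M₂]
    (F₁ : Set X → Submodule R M₁) (F₂ : Set X → Submodule R M₂)
    (f : M₁ →ₗ[R] M₂) (D : ℝ) : Prop :=
  ∀ S : Set X, (F₁ S).map f ≤ F₂ (enl S D)

/-- `f` is boundedly bicontrolled of filtration degree `≤ D`: in addition to being
boundedly controlled with bound `D`, `range(f) ∩ F₂(S) ⊆ f(F₁(S[D]))` for all `S`. -/
def BddBictrl {R X M₁ M₂ : Type*} [Ring R] [MetricSpace X]
    [AddCommGroup M₁] [Module R M₁] [AddCommGroup M₂] [Module R M₂]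
    (F₁ : Set X → Submodule R M₁) (F₂ : Set X → Submodule R M₂)
    (f : M₁ →ₗ[R] M₂) (D : ℝ) : Prop :=
  BddCtrl F₁ F₂ f D ∧
    ∀ S : Set X, LinearMap.range f ⊓ F₂ S ≤ (F₁ (enl S D)).map f

/-- `(M, F)` is `D`-lean: `F(S)` is contained in the sum of the `F(B_D(x))` over `x ∈ S`. -/
def IsLean {R X M : Type*} [Ring R] [MetricSpace X] [AddCommGroup M] [Module R M]
    (F : Set X → Submodule R M) (D : ℝ) : Prop :=
  ∀ S : Set X, F S ≤ ⨆ x ∈ S, F (Metric.closedBall x D)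

/-- `(M, F)` is `d`-insular: `F(T) ∩ F(U) ⊆ F(T[d] ∩ U[d])` for all `T`, `U`. -/
def IsInsular {R X M : Type*} [Ring R] [MetricSpace X] [AddCommGroup M] [Module R M]
    (F : Set X → Submodule R M) (d : ℝ) : Prop :=
  ∀ T U : Set X, F T ⊓ F U ≤ F (enl T d ∩ enl U d)

theorem insular_extension
    {R X M' M M'' : Type*} [Ring R] [MetricSpace X]
    [AddCommGroup M'] [Module R M'] [AddCommGroup M] [Module R M]
    [AddCommGroup M''] [Module R M'']
    (F' : Set X → Submodule R M') (F : Set X → Submodule R M)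
    (F'' : Set X → Submodule R M'')
    (hF' : IsXFiltration F') (hF : IsXFiltration F) (hF'' : IsXFiltration F'')
    (f : M' →ₗ[R] M) (g : M →ₗ[R] M'') (b : ℝ) (hb : 0 ≤ b)
    (hfb : BddBictrl F' F f b) (hgb : BddBictrl F F'' g b)
    (hfi : Function.Injective f) (hgs : Function.Surjective g)
    (hex : LinearMap.range f = LinearMap.ker g)
    (d : ℝ) (hd : 0 ≤ d) (hins' : IsInsular F' d) (hins'' : IsInsular F'' d) :
    IsInsular F (4*b + 2*d) := by
  intro T U z hz
  obtain ⟨hzT, hzU⟩ := Submodule.mem_inf.mp hz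
  -- Step 1: g z lands in F''(T[b]) ∩ F''(U[b]), hence by insularity in F'' S, where
  set S : Set X := enl (enl T b) d ∩ enl (enl U b) d with hS
  have hgzT : g z ∈ F'' (enl T b) := hgb.1 T ⟨z, hzT, rfl⟩
  have hgzU : g z ∈ F'' (enl U b) := hgb.1 U ⟨z, hzU, rfl⟩
  have hgzS : g z ∈ F'' S := hins'' (enl T b) (enl U b) (Submodule.mem_inf.mpr ⟨hgzT, hgzU⟩)
  -- Step 2: pull back via bicontrol of g
  obtain ⟨w, hw, hgw⟩ := hgb.2 S (Submodule.mem_inf.mpr ⟨⟨z, rfl⟩, hgzS⟩)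
  -- w ∈ F(enl S b) ⊆ F(enl T (b+d+b)) ∩ F(enl U (b+d+b))
  have key : ∀ V : Set X, enl (enl (enl V b) d) b ⊆ enl V (2*b + d) := by
    intro V
    refine Set.Subset.trans (enl_enl' _ d b) ?_
    refine Set.Subset.trans (enl_enl' _ b (d + b)) ?_
    exact enl_radius_mono' _ (by linarith)
  have hSbT : enl S b ⊆ enl T (2*b + d) :=
    Set.Subset.trans (enl_mono' Set.inter_subset_left b) (key T)
  have hSbU : enl S b ⊆ enl U (2*b + d) :=
    Set.Subset.trans (enl_mono' Set.inter_subset_right b) (key U)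
  set A : Set X := enl T (2*b + d) with hA
  set B : Set X := enl U (2*b + d) with hB
  have hwA : w ∈ F A := hF.1 hSbT hw
  have hwB : w ∈ F B := hF.1 hSbU hw
  have hzA : z ∈ F A := hF.1 (subset_enl' T (by linarith)) hzT
  have hzB : z ∈ F B := hF.1 (subset_enl' U (by linarith)) hzU
  -- z - w ∈ ker g = range f
  have hzw : z - w ∈ LinearMap.range f := by
    rw [hex, LinearMap.mem_ker, map_sub, hgw, sub_self]
  -- pull back via bicontrol of f, twice
  obtain ⟨u, hu, hfu⟩ := hfb.2 A (Submodule.mem_inf.mpr ⟨hzw, (F A).sub_mem hzA hwA⟩)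
  obtain ⟨v, hv, hfv⟩ := hfb.2 B (Submodule.mem_inf.mpr ⟨hzw, (F B).sub_mem hzB hwB⟩)
  have huv : u = v := hfi (by rw [hfu, hfv])
  -- insularity of F'
  have hu' : u ∈ F' (enl (enl A b) d ∩ enl (enl B b) d) :=
    hins' (enl A b) (enl B b) (Submodule.mem_inf.mpr ⟨hu, huv ▸ hv⟩)
  -- push forward via f
  have hfuF : z - w ∈ F (enl (enl (enl A b) d ∩ enl (enl B b) d) b) :=
    hfu ▸ hfb.1 _ ⟨u, hu', rfl⟩
  -- the target set
  have htarg : enl (enl (enl A b) d ∩ enl (enl B b) d) b ⊆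
      enl T (4*b + 2*d) ∩ enl U (4*b + 2*d) := by
    intro x hx
    constructor
    · have h1 : x ∈ enl (enl (enl A b) d) b := enl_mono' Set.inter_subset_left b hx
      have h2 : x ∈ enl A (2*b + d) := key A h1
      have h3 : x ∈ enl T ((2*b + d) + (2*b + d)) := enl_enl' T _ _ h2
      exact enl_radius_mono' T (by linarith) h3
    · have h1 : x ∈ enl (enl (enl B b) d) b := enl_mono' Set.inter_subset_right b hx
      have h2 : x ∈ enl B (2*b + d) := key B h1
      have h3 : x ∈ enl U ((2*b + d) + (2*b + d)) := enl_enl' U _ _ h2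
      exact enl_radius_mono' U (by linarith) h3
  have hzwF : z - w ∈ F (enl T (4*b + 2*d) ∩ enl U (4*b + 2*d)) := hF.1 htarg hfuF
  have hwF : w ∈ F (enl T (4*b + 2*d) ∩ enl U (4*b + 2*d)) := by
    refine hF.1 ?_ hw
    intro x hx
    exact ⟨enl_radius_mono' T (by linarith) (hSbT hx),
      enl_radius_mono' U (by linarith) (hSbU hx)⟩
  have : z - w + w ∈ F (enl T (4*b + 2*d) ∩ enl U (4*b + 2*d)) :=
    Submodule.add_mem _ hzwF hwF
  simpa using this
end

section
/- Let Z ⊆ X and let (M,F) be an X-filtered R-module that is D-lean, c-insular, and supported near Z with F(X) = F(Z[d]). (i) If f : (M',F') → (M,F) is an injective boundedly bicontrolled map of filtration degree ≤ b and F' is D'-lean, then F'(X) = F'(Z[d + D + 2D' + b + 2c]). (ii) If g : (M,F) → (M'',F'') is a surjective boundedly bicontrolled map of filtration degree ≤ b, then F''(X) = F''(Z[d + D + b]). -/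
open Set Metric

lemma enl_enl_subset {X : Type*} [MetricSpace X] (S : Set X) {a a' : ℝ}
    (h : a ≤ a') : enl (enl S a) (a' - a) ⊆ enl S a' := by
  rintro x ⟨y, ⟨s, hs, hys⟩, hxy⟩
  exact ⟨s, hs, (dist_triangle x y s).trans (by linarith)⟩

/-- Let `(M,F)` be `D`-lean, `c`-insular and supported near `Z` with `F(X) = F(Z[d])`.
(i) If `f : (M',F') → (M,F)` is an injective boundedly bicontrolled map of degree `≤ b`
and `F'` is `D'`-lean, then `F'(X) = F'(Z[d + D + 2D' + b + 2c])`.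
(ii) If `g : (M,F) → (M'',F'')` is a surjective boundedly bicontrolled map of degree
`≤ b`, then `F''(X) = F''(Z[d + D + b])`. -/
theorem supported_near_sub_and_quotient
    {R X M' M M'' : Type*} [Ring R] [MetricSpace X]
    [AddCommGroup M'] [Module R M'] [AddCommGroup M] [Module R M]
    [AddCommGroup M''] [Module R M'']
    (F' : Set X → Submodule R M') (F : Set X → Submodule R M)
    (F'' : Set X → Submodule R M'')
    (hF' : IsXFiltration F') (hF : IsXFiltration F) (hF'' : IsXFiltration F'')
    (Z : Set X) (b c d D D' : ℝ)
    (hb : 0 ≤ b) (hc : 0 ≤ c) (hd : 0 ≤ d) (hD : 0 ≤ D) (hD' : 0 ≤ D')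
    (hlean : IsLean F D) (hins : IsInsular F c)
    (hsupp : F Set.univ = F (enl Z d))
    (f : M' →ₗ[R] M) (hfi : Function.Injective f) (hfb : BddBictrl F' F f b)
    (hlean' : IsLean F' D')
    (g : M →ₗ[R] M'') (hgs : Function.Surjective g) (hgb : BddBictrl F F'' g b) :
    F' Set.univ = F' (enl Z (d + D + 2*D' + b + 2*c)) ∧
    F'' Set.univ = F'' (enl Z (d + D + b)) := by
  constructor
  · apply le_antisymm
    · intro m' _
      have h1 : f m' ∈ F (enl Z d) := by
        rw [← hsupp, hF.2.2]; trivial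
      have h2 : f m' ∈ (F' (enl (enl Z d) b)).map f :=
        hfb.2 (enl Z d) ⟨⟨m', rfl⟩, h1⟩
      obtain ⟨n, hn, hfn⟩ := h2
      rw [hfi hfn] at hn
      refine hF'.1 ?_ hn
      intro x hx
      have : enl (enl Z d) ((d + b) - d) ⊆ enl Z (d + b) :=
        enl_enl_subset Z (by linarith)
      obtain ⟨s, hs, hxs⟩ := this (by simpa using hx)
      exact ⟨s, hs, by linarith⟩
    · exact hF'.1 (Set.subset_univ _)
  · apply le_antisymm
    · intro u _
      have h1 : u ∈ (F (enl Set.univ b)).map g :=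
        hgb.2 Set.univ ⟨hgs u, by rw [hF''.2.2]; trivial⟩
      obtain ⟨m, _, hgm⟩ := h1
      have hm : m ∈ F (enl Z d) := by
        rw [← hsupp, hF.2.2]; trivial
      have h2 : g m ∈ F'' (enl (enl Z d) b) :=
        hgb.1 (enl Z d) ⟨m, hm, rfl⟩
      rw [hgm] at h2
      refine hF''.1 ?_ h2
      intro x hx
      have : enl (enl Z d) ((d + b) - d) ⊆ enl Z (d + b) :=
        enl_enl_subset Z (by linarith)
      obtain ⟨s, hs, hxs⟩ := this (by simpa using hx)
      exact ⟨s, hs, by linarith⟩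
    · exact hF''.1 (Set.subset_univ _)
end
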